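/- arXiv:math/0608227 — 6 statements merged into one kernel-verified Lean document; each statement's English description precedes it below -/
import Mathlib

section
/- Let A be a unital C*-algebra over ℂ and let α be a *-automorphism of A. Then there exists a state φ of A that is α-invariant, i.e. φ ∘ α = φ. -/
/-!
Let `S` be the set of functionals `φ` with `‖φ‖ ≤ 1` and `φ 1 = 1`. It is weak-* compact
(Banach–Alaoglu), convex, and mapped into itself by `φ ↦ φ ∘ α`. For `ψ ∈ S` the Cesàro means
`(n + 1)⁻¹ ∑_{k ≤ n} ψ ∘ αᵏ` lie in `S` and are invariant up to `(ψ ∘ αⁿ⁺¹ - ψ) / (n + 1) → 0`,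
so any weak-* cluster point of them is an invariant element of `S` (the single-map case of the
Markov–Kakutani theorem). Every element of `S` is positive: for self-adjoint `b` the C*-identity
gives `‖b + i t‖² ≤ ‖b‖² + t²` for all real `t`, which forces `φ b` to be real.
-/

open Filter Topology Set Complex
open scoped ComplexOrder Pointwise

section CesaroMean

variable {E : Type*} [AddCommGroup E] [Module ℝ E] [TopologicalSpace E]

noncomputable def cesaroMean (T : E →L[ℝ] E) (x : E) (n : ℕ) : E :=
  ((n : ℝ) + 1)⁻¹ • ∑ k ∈ Finset.range (n + 1), (T ^ k) x

lemma Convex.cesaroMean_mem {K : Set E} (hK : Convex ℝ K) {T : E →L[ℝ] E} (hT : MapsTo T K K)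
    {x : E} (hx : x ∈ K) (n : ℕ) : cesaroMean T x n ∈ K := by
  rw [cesaroMean, Finset.smul_sum]
  refine hK.sum_mem (fun _ _ => by positivity) ?_ fun k _ => ?_
  · rw [Finset.sum_const, Finset.card_range, nsmul_eq_mul]
    push_cast
    field_simp
  · rw [FunLike.coe_pow_eq_iterate]
    exact hT.iterate k hx

lemma apply_cesaroMean_sub (T : E →L[ℝ] E) (x : E) (n : ℕ) :
    T (cesaroMean T x n) - cesaroMean T x n = ((n : ℝ) + 1)⁻¹ • ((T ^ (n + 1)) x - x) := by
  have hstep (k : ℕ) : T ((T ^ k) x) = (T ^ (k + 1)) x := by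
    rw [pow_succ', mul_apply_eq_comp]
  simp only [cesaroMean, map_smul, map_sum, ← smul_sub, ← Finset.sum_sub_distrib, hstep,
    Finset.sum_range_sub (fun k => (T ^ k) x), pow_zero, one_apply_eq_self]

lemma tendsto_apply_cesaroMean_sub [IsTopologicalAddGroup E] [ContinuousSMul ℝ E] {K : Set E}
    (hK : IsCompact K) {T : E →L[ℝ] E} (hT : MapsTo T K K) {x : E} (hx : x ∈ K) :
    Tendsto (fun n => T (cesaroMean T x n) - cesaroMean T x n) atTop (𝓝 0) := by
  simp_rw [apply_cesaroMean_sub]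
  have hbdd : Bornology.IsVonNBounded ℝ (K - K) :=
    Bornology.isVonNBounded_sub.2 (.inr (.inr ⟨hK.isVonNBounded ℝ, hK.isVonNBounded ℝ⟩))
  refine hbdd.smul_tendsto_zero (.of_forall fun n => sub_mem_sub ?_ hx) ?_
  · rw [FunLike.coe_pow_eq_iterate]
    exact hT.iterate _ hx
  · simpa using tendsto_one_div_add_atTop_nhds_zero_nat (𝕜 := ℝ)

theorem Convex.exists_fixedPoint_of_isCompact [IsTopologicalAddGroup E] [ContinuousSMul ℝ E]
    [T2Space E] {K : Set E} (hconv : Convex ℝ K) (hK : IsCompact K) (hne : K.Nonempty)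
    (T : E →L[ℝ] E) (hT : MapsTo T K K) : ∃ y ∈ K, T y = y := by
  obtain ⟨x, hx⟩ := hne
  obtain ⟨y, hyK, hy⟩ := hK.exists_clusterPt (f := map (cesaroMean T x) atTop)
    (le_principal_iff.2 (mem_map.2 (Eventually.of_forall (hconv.cesaroMean_mem hT hx))))
  refine ⟨y, hyK, sub_eq_zero.1 (eq_of_nhds_neBot ?_)⟩
  have hcluster := hy.map (T.continuous.sub continuous_id).continuousAt tendsto_map
  rw [map_map] at hcluster
  exact (hcluster.mono (tendsto_apply_cesaroMean_sub hK hT hx)).neBot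

end CesaroMean

lemma Complex.im_eq_zero_and_abs_re_le_of_norm_add_mul_I_sq_le {z : ℂ} {r : ℝ} (hr : 0 ≤ r)
    (h : ∀ t : ℝ, ‖z + t * I‖ ^ 2 ≤ r ^ 2 + t ^ 2) : z.im = 0 ∧ |z.re| ≤ r := by
  have hbound (t : ℝ) : z.re ^ 2 + z.im ^ 2 + 2 * z.im * t ≤ r ^ 2 := by
    have ht := h t
    rw [Complex.sq_norm, Complex.normSq_apply] at ht
    simp only [add_re, ofReal_re, mul_re, I_re, mul_zero, ofReal_im, I_im, mul_one, sub_self,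
      add_zero, add_im, mul_im] at ht
    nlinarith
  constructor
  · by_contra hz
    have ht := hbound ((r ^ 2 + 1) / (2 * z.im))
    rw [mul_div_cancel₀ _ (by positivity)] at ht
    nlinarith [sq_nonneg z.re, sq_nonneg z.im]
  · exact abs_le_of_sq_le_sq (by nlinarith [hbound 0, sq_nonneg z.im]) hr

section CStarAlgebra

variable {A : Type*} [CStarAlgebra A] [Nontrivial A]

lemma IsSelfAdjoint.norm_add_mul_I_smul_one_sq_le {b : A} (hb : IsSelfAdjoint b) (t : ℝ) :
    ‖b + ((t : ℂ) * I) • (1 : A)‖ ^ 2 ≤ ‖b‖ ^ 2 + t ^ 2 := by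
  have hstar : star (b + ((t : ℂ) * I) • (1 : A)) * (b + ((t : ℂ) * I) • (1 : A))
      = b * b + ((t ^ 2 : ℝ) : ℂ) • (1 : A) := by
    have hI : star ((t : ℂ) * I) = -((t : ℂ) * I) := by simp
    have ht : ((t ^ 2 : ℝ) : ℂ) = -((t : ℂ) * I) * ((t : ℂ) * I) := by
      push_cast
      ring_nf
      rw [I_sq]
      ring
    simp only [star_add, star_smul, star_one, hb.star_eq, hI, ht, add_mul, mul_add,
      smul_mul_assoc, mul_smul_comm, mul_one, one_mul]
    module
  calc ‖b + ((t : ℂ) * I) • (1 : A)‖ ^ 2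
      = ‖b * b + ((t ^ 2 : ℝ) : ℂ) • (1 : A)‖ := by
        rw [← hstar, CStarRing.norm_star_mul_self, sq]
    _ ≤ ‖b * b‖ + ‖((t ^ 2 : ℝ) : ℂ) • (1 : A)‖ := norm_add_le _ _
    _ ≤ ‖b‖ ^ 2 + t ^ 2 := by
      gcongr
      · exact sq ‖b‖ ▸ norm_mul_le b b
      · simp [norm_smul]

variable {φ : StrongDual ℂ A}

lemma im_apply_eq_zero_and_abs_re_apply_le (hφ : ‖φ‖ ≤ 1) (h1 : φ 1 = 1) {b : A}
    (hb : IsSelfAdjoint b) : (φ b).im = 0 ∧ |(φ b).re| ≤ ‖b‖ := by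
  refine Complex.im_eq_zero_and_abs_re_le_of_norm_add_mul_I_sq_le (norm_nonneg b) fun t => ?_
  calc ‖φ b + t * I‖ ^ 2 = ‖φ (b + ((t : ℂ) * I) • 1)‖ ^ 2 := by simp [h1]
    _ ≤ ‖b + ((t : ℂ) * I) • (1 : A)‖ ^ 2 := by
      gcongr
      exact (φ.le_of_opNorm_le hφ _).trans_eq (one_mul _)
    _ ≤ ‖b‖ ^ 2 + t ^ 2 := hb.norm_add_mul_I_smul_one_sq_le t

lemma apply_nonneg_of_norm_le_one [PartialOrder A] [StarOrderedRing A] (hφ : ‖φ‖ ≤ 1)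
    (h1 : φ 1 = 1) {x : A} (hx : 0 ≤ x) : 0 ≤ φ x := by
  set y := algebraMap ℝ A ‖x‖ - x
  have hy : 0 ≤ y := sub_nonneg.2 (IsSelfAdjoint.of_nonneg hx).le_algebraMap_norm_self
  have hyx : ‖y‖ ≤ ‖x‖ :=
    (CStarAlgebra.norm_le_iff_le_algebraMap y (norm_nonneg x) hy).2 (sub_le_self _ hx)
  have hφy : φ y = ‖x‖ - φ x := by simp [y, Algebra.algebraMap_eq_smul_one, h1]
  obtain ⟨him, hre⟩ := im_apply_eq_zero_and_abs_re_apply_le hφ h1 (IsSelfAdjoint.of_nonneg hy)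
  simp only [hφy, sub_im, ofReal_im, zero_sub, neg_eq_zero, sub_re, ofReal_re] at him hre
  rw [Complex.le_def, zero_re, zero_im, him]
  exact ⟨by linarith [(abs_le.1 (hre.trans hyx)).2], rfl⟩

end CStarAlgebra

section Transpose

variable {𝕜 E F : Type*} [NormedField 𝕜] [AddCommGroup E] [Module 𝕜 E] [TopologicalSpace E]
  [AddCommGroup F] [Module 𝕜 F] [TopologicalSpace F]

noncomputable def WeakDual.transpose (f : E →L[𝕜] F) : WeakDual 𝕜 F →L[𝕜] WeakDual 𝕜 E where
  toFun φ := StrongDual.toWeakDual ((WeakDual.toStrongDual φ).comp f)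
  map_add' _ _ := rfl
  map_smul' _ _ := rfl
  cont := WeakDual.continuous_of_continuous_eval fun x => WeakDual.eval_continuous (f x)

@[simp]
lemma WeakDual.transpose_apply (f : E →L[𝕜] F) (φ : WeakDual 𝕜 F) (x : E) :
    WeakDual.transpose f φ x = φ (f x) :=
  rfl

end Transpose

instance {E : Type*} [AddCommGroup E] [Module ℂ E] [TopologicalSpace E] :
    IsScalarTower ℝ ℂ (WeakDual ℂ E) :=
  inferInstanceAs (IsScalarTower ℝ ℂ (E →L[ℂ] ℂ))

namespace WeakDual

variable {A : Type*} [NormedRing A] [NormedAlgebra ℂ A]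

variable (A) in
/-- The state space of a unital normed algebra in the sense of Bonsall–Duncan; for a
C*-algebra its members are positive by `apply_nonneg_of_norm_le_one`. -/
def stateSpace : Set (WeakDual ℂ A) := {φ | ‖toStrongDual φ‖ ≤ 1 ∧ φ 1 = 1}

lemma isCompact_stateSpace : IsCompact (stateSpace A) := by
  convert (isCompact_closedBall (0 : StrongDual ℂ A) 1).inter_right
    (isClosed_eq (eval_continuous (1 : A)) (continuous_const (y := (1 : ℂ)))) using 1
  ext φ
  simp [stateSpace]

lemma convex_stateSpace : Convex ℝ (stateSpace A) := by
  rintro φ ⟨hφ, hφ1⟩ ψ ⟨hψ, hψ1⟩ a b ha hb hab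
  refine ⟨?_, ?_⟩
  · change ‖a • toStrongDual φ + b • toStrongDual ψ‖ ≤ 1
    calc ‖a • toStrongDual φ + b • toStrongDual ψ‖
        ≤ a * ‖toStrongDual φ‖ + b * ‖toStrongDual ψ‖ := by
          refine (norm_add_le _ _).trans ?_
          rw [norm_smul, norm_smul, Real.norm_of_nonneg ha, Real.norm_of_nonneg hb]
      _ ≤ a * 1 + b * 1 := by gcongr
      _ = 1 := by rw [mul_one, mul_one, hab]
  · change a • φ 1 + b • ψ 1 = 1
    rw [hφ1, hψ1, ← add_smul, hab, one_smul]

lemma stateSpace_nonempty [NormOneClass A] [Nontrivial A] : (stateSpace A).Nonempty := by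
  obtain ⟨g, hg, hg1⟩ := exists_dual_vector ℂ (1 : A) (norm_ne_zero_iff.2 one_ne_zero)
  exact ⟨StrongDual.toWeakDual g, hg.le, by simpa using hg1⟩

lemma mapsTo_transpose_stateSpace {f : A →L[ℂ] A} (hf : ‖f‖ ≤ 1) (hf1 : f 1 = 1) :
    MapsTo (transpose f) (stateSpace A) (stateSpace A) := by
  rintro φ ⟨hφ, hφ1⟩
  refine ⟨?_, by simpa [hf1] using hφ1⟩
  change ‖(toStrongDual φ).comp f‖ ≤ 1
  exact (ContinuousLinearMap.opNorm_comp_le _ _).trans (mul_le_one₀ hφ (norm_nonneg _) hf)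

theorem exists_mem_stateSpace_forall_apply_eq [NormOneClass A] [Nontrivial A] {f : A →L[ℂ] A}
    (hf : ‖f‖ ≤ 1) (hf1 : f 1 = 1) : ∃ φ ∈ stateSpace A, ∀ a, φ (f a) = φ a := by
  -- The parentheses make instance search, not unification with `convex_stateSpace`, choose the
  -- `ℝ`-module structure of `WeakDual ℂ A`; otherwise `ContinuousSMul ℝ` is not found.
  obtain ⟨φ, hφ, hφf⟩ := (Convex.exists_fixedPoint_of_isCompact (K := stateSpace A))
    convex_stateSpace isCompact_stateSpace stateSpace_nonempty
    ((transpose f).restrictScalars ℝ) (mapsTo_transpose_stateSpace hf hf1)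
  exact ⟨φ, hφ, fun a => congr($hφf a)⟩

end WeakDual

/-- Every *-automorphism of a unital C*-algebra admits an invariant state. -/
theorem exists_invariant_state {A : Type*} [NormedRing A] [StarRing A] [CStarRing A]
    [NormedAlgebra ℂ A] [CompleteSpace A] [StarModule ℂ A] [Nontrivial A]
    (α : A ≃⋆ₐ[ℂ] A) :
    ∃ φ : A →L[ℂ] ℂ, (φ 1 = 1 ∧ ∀ a : A, 0 ≤ φ (star a * a)) ∧ ∀ a : A, φ (α a) = φ a := by
  let _ : CStarAlgebra A := {}
  let _ := CStarAlgebra.spectralOrder A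
  have _ := CStarAlgebra.spectralOrderedRing A
  let αL : A →L[ℂ] A := (α.toAlgEquiv.toLinearEquiv : A →ₗ[ℂ] A).mkContinuous 1 fun a => by
    simpa using (StarAlgEquiv.norm_map α a).le
  obtain ⟨φ, ⟨hφ, hφ1⟩, hφα⟩ := WeakDual.exists_mem_stateSpace_forall_apply_eq (f := αL)
    (LinearMap.mkContinuous_norm_le _ zero_le_one _) (map_one α)
  exact ⟨WeakDual.toStrongDual φ,
    ⟨hφ1, fun a => apply_nonneg_of_norm_le_one hφ hφ1 (star_mul_self_nonneg a)⟩, hφα⟩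
end

section
/- Let A be a unital C*-algebra over ℂ and α a *-automorphism of A with fixed-point subalgebra A^α. If every state of A^α has a unique extension to a state φ of A satisfying φ ∘ α = φ, then the linear subspace A^α + {a − α(a) : a ∈ A} is dense in A in the norm topology. -/
/-!
If `A^α + (1 - α)A` is not dense, Hahn–Banach gives a nonzero real functional `F` vanishing on it;
splitting into hermitian parts we may take `F` hermitian, and it is `α`-invariant and kills `A^α`.
After normalising, M. Riesz's extension theorem on `A × A`, for the cone of pairs that are positive
modulo skew-adjoint elements and coboundaries `α a - a`, writes `F = φ - ψ` with `φ`, `ψ`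
`α`-invariant states. The positivity needed there comes from Cesàro averaging along `α`, which
makes coboundaries small while fixing `F`. As `φ` and `ψ` agree on `A^α`, uniqueness of invariant
extensions gives `φ = ψ`, so `F = 0`.
-/

open scoped ComplexOrder
open Filter Topology

/-- The fixed-point subalgebra `A^α` of a *-automorphism `α` of a unital C*-algebra `A`. -/
def fixedPointSubalgebra {A : Type*} [NormedRing A] [StarRing A] [NormedAlgebra ℂ A]
    [StarModule ℂ A] (α : A ≃⋆ₐ[ℂ] A) : StarSubalgebra ℂ A where
  carrier := {a : A | α a = a}
  mul_mem' {a b} ha hb := by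
    simp only [Set.mem_setOf_eq] at *
    rw [map_mul, ha, hb]
  add_mem' {a b} ha hb := by
    simp only [Set.mem_setOf_eq] at *
    rw [map_add, ha, hb]
  algebraMap_mem' r := by
    simp only [Set.mem_setOf_eq, Algebra.algebraMap_eq_smul_one, map_smul, map_one]
  star_mem' {a} ha := by
    simp only [Set.mem_setOf_eq] at *
    rw [map_star, ha]

theorem Submodule.dense_of_forall_dual_eq_zero {E : Type*} [TopologicalSpace E] [AddCommGroup E]
    [IsTopologicalAddGroup E] [Module ℝ E] [ContinuousSMul ℝ E] [LocallyConvexSpace ℝ E]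
    (p : Submodule ℝ E) (h : ∀ F : StrongDual ℝ E, (∀ x ∈ p, F x = 0) → F = 0) :
    Dense (p : Set E) := by
  intro x
  by_contra hx
  obtain ⟨F, u, hFx, hFu⟩ := geometric_hahn_banach_point_closed p.convex.closure isClosed_closure hx
  have hF : ∀ y ∈ p, F y = 0 := by
    intro y hy
    by_contra hne
    have := hFu ((u / F y) • y) (subset_closure (p.smul_mem _ hy))
    rw [map_smul, smul_eq_mul, div_mul_cancel₀ _ hne] at this
    exact lt_irrefl _ this
  have h0 := hFu 0 (subset_closure p.zero_mem)
  rw [h F hF, zero_apply] at hFx h0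
  linarith

section AddNegAlgebraMap

variable (R A : Type*) [Field R] [Ring A] [Algebra R A]

def addNegAlgebraMap : A × R →ₗ[R] A × A :=
  (LinearMap.fst R A R + Algebra.linearMap R A ∘ₗ LinearMap.snd R A R).prod
    (-LinearMap.fst R A R + Algebra.linearMap R A ∘ₗ LinearMap.snd R A R)

lemma addNegAlgebraMap_injective [CharZero R] [Nontrivial A] :
    Function.Injective (addNegAlgebraMap R A) := by
  rw [injective_iff_map_eq_zero]
  rintro ⟨x, t⟩ hp
  obtain ⟨hx, hx'⟩ := Prod.mk_eq_zero.1 hp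
  change x + algebraMap R A t = 0 at hx
  change -x + algebraMap R A t = 0 at hx'
  have ht : algebraMap R A (t + t) = algebraMap R A 0 :=
    calc algebraMap R A (t + t) = (x + algebraMap R A t) + (-x + algebraMap R A t) := by
          rw [map_add]; abel
      _ = algebraMap R A 0 := by rw [hx, hx', add_zero, map_zero]
  obtain rfl : t = 0 := by simpa using (algebraMap R A).injective ht
  simpa using hx

end AddNegAlgebraMap

def IsState {B : Type*} [Ring B] [StarRing B] [TopologicalSpace B] [Module ℂ B]
    (Φ : B →L[ℂ] ℂ) : Prop :=
  Φ 1 = 1 ∧ ∀ b, 0 ≤ Φ (star b * b)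

namespace StarAlgEquiv

variable {A : Type*} [CStarAlgebra A] (α : A ≃⋆ₐ[ℂ] A)

lemma map_algebraMap_real (s : ℝ) : α (algebraMap ℝ A s) = algebraMap ℝ A s := by
  rw [IsScalarTower.algebraMap_apply ℝ ℂ A, AlgHomClass.commutes]

lemma map_real_smul (r : ℝ) (x : A) : α (r • x) = r • α x := by
  rw [← Complex.coe_smul, map_smul, Complex.coe_smul]

lemma birkhoffAverage_add_apply (n : ℕ) (x y : A) :
    birkhoffAverage ℝ α id n (x + y) =
      birkhoffAverage ℝ α id n x + birkhoffAverage ℝ α id n y := by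
  simp only [birkhoffAverage, birkhoffSum, id, ← coe_pow, map_add, Finset.sum_add_distrib,
    smul_add]

lemma birkhoffAverage_algebraMap_add_sub {n : ℕ} (hn : n ≠ 0) (s : ℝ) (c : A) :
    birkhoffAverage ℝ α id n (algebraMap ℝ A s + (α c - c)) =
      algebraMap ℝ A s + (n : ℝ)⁻¹ • ((α ^ n) c - c) := by
  have hs : Function.IsFixedPt α (algebraMap ℝ A s) := map_algebraMap_real α s
  have hsub := birkhoffAverage_apply_sub_birkhoffAverage (R := ℝ) α id n c
  have hadd := birkhoffAverage_add_apply α n (α c - c) c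
  rw [sub_add_cancel] at hadd
  rw [birkhoffAverage_add_apply, hs.birkhoffAverage_eq (R := ℝ) id (Nat.cast_ne_zero.2 hn),
    eq_sub_of_add_eq hadd.symm, hsub, coe_pow]
  rfl

lemma apply_birkhoffAverage {n : ℕ} (hn : n ≠ 0) (F : StrongDual ℝ A)
    (hF : ∀ a, F (α a) = F a) (x : A) : F (birkhoffAverage ℝ α id n x) = F x := by
  rw [map_birkhoffAverage ℝ ℝ F,
    birkhoffAverage_of_comp_eq ℝ (funext hF : (⇑F ∘ id) ∘ α = ⇑F ∘ id) (Nat.cast_ne_zero.2 hn)]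
  rfl

section Order

variable [PartialOrder A] [StarOrderedRing A]

lemma birkhoffAverage_mono {n : ℕ} {x y : A} (h : x ≤ y) :
    birkhoffAverage ℝ α id n x ≤ birkhoffAverage ℝ α id n y := by
  simp only [birkhoffAverage, birkhoffSum, id, ← coe_pow]
  gcongr

lemma norm_birkhoffAverage_le [Nontrivial A] {v c : A} {s : ℝ} (hc : IsSelfAdjoint c)
    (hv : 0 ≤ v) (hvs : v ≤ algebraMap ℝ A s + (α c - c)) {n : ℕ} (hn : n ≠ 0) :
    ‖birkhoffAverage ℝ α id n v‖ ≤ s + 2 * ‖c‖ / n := by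
  set e := (n : ℝ)⁻¹ • ((α ^ n) c - c)
  have he : IsSelfAdjoint e :=
    IsSelfAdjoint.smul (star_trivial _) ((hc.map (α ^ n)).sub hc)
  have he_norm : ‖e‖ ≤ 2 * ‖c‖ / n := by
    have : ‖(α ^ n) c - c‖ ≤ 2 * ‖c‖ := by
      linarith [norm_sub_le ((α ^ n) c) c, StarAlgEquiv.norm_map (α ^ n) c]
    rwa [norm_smul, norm_inv, Real.norm_natCast, inv_mul_le_iff₀ (by positivity),
      mul_div_cancel₀ _ (by positivity)]
  have h0 : 0 ≤ birkhoffAverage ℝ α id n v := by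
    simpa [birkhoffAverage, birkhoffSum] using birkhoffAverage_mono α (n := n) hv
  have hle : birkhoffAverage ℝ α id n v ≤ algebraMap ℝ A (s + ‖e‖) :=
    calc birkhoffAverage ℝ α id n v
        ≤ birkhoffAverage ℝ α id n (algebraMap ℝ A s + (α c - c)) := birkhoffAverage_mono α hvs
      _ = algebraMap ℝ A s + e := birkhoffAverage_algebraMap_add_sub α hn s c
      _ ≤ algebraMap ℝ A (s + ‖e‖) := by
        rw [map_add]
        gcongr
        exact he.le_algebraMap_norm_self
  have hr : 0 ≤ s + ‖e‖ :=
    (algebraMap_le_algebraMap (β := A)).1 (by rw [map_zero]; exact h0.trans hle)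
  calc ‖birkhoffAverage ℝ α id n v‖ ≤ s + ‖e‖ :=
        (CStarAlgebra.norm_le_iff_le_algebraMap _ hr h0).2 hle
    _ ≤ s + 2 * ‖c‖ / n := by gcongr

lemma abs_apply_le_of_le_algebraMap_add [Nontrivial A] (F : StrongDual ℝ A) (hF : ‖F‖ ≤ 1)
    (hFα : ∀ a, F (α a) = F a) {v c : A} {s : ℝ} (hc : IsSelfAdjoint c) (hv : 0 ≤ v)
    (hvs : v ≤ algebraMap ℝ A s + (α c - c)) : |F v| ≤ s := by
  have hbound (n : ℕ) (hn : n ≠ 0) : |F v| ≤ s + 2 * ‖c‖ / n :=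
    calc |F v| = ‖F (birkhoffAverage ℝ α id n v)‖ := by
          rw [apply_birkhoffAverage α hn F hFα, Real.norm_eq_abs]
      _ ≤ ‖F‖ * ‖birkhoffAverage ℝ α id n v‖ := F.le_opNorm _
      _ ≤ 1 * (s + 2 * ‖c‖ / n) :=
          mul_le_mul hF (norm_birkhoffAverage_le α hc hv hvs hn) (norm_nonneg _) zero_le_one
      _ = s + 2 * ‖c‖ / n := one_mul _
  have hlim : Tendsto (fun n : ℕ ↦ s + 2 * ‖c‖ / n) atTop (𝓝 s) := by
    simpa using tendsto_const_nhds.add (tendsto_const_div_atTop_nhds_zero_nat (2 * ‖c‖))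
  exact ge_of_tendsto hlim (eventually_atTop.2 ⟨1, fun n hn ↦ hbound n (by omega)⟩)

/-- The real functionals that are nonnegative on this cone are exactly the hermitian, positive,
`α`-invariant ones. -/
def invariantCone : PointedCone ℝ A where
  carrier := {x | ∃ a, IsSelfAdjoint a ∧ 0 ≤ x + star x + (α a - a)}
  zero_mem' := ⟨0, .zero A, by simp⟩
  add_mem' := by
    rintro x y ⟨a, ha, hx⟩ ⟨b, hb, hy⟩
    refine ⟨a + b, ha.add hb, ?_⟩
    convert add_nonneg hx hy using 1
    rw [star_add, map_add]
    abel
  smul_mem' := by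
    rintro ⟨r, hr⟩ x ⟨a, ha, hx⟩
    refine ⟨r • a, IsSelfAdjoint.smul (star_trivial _) ha, ?_⟩
    convert smul_nonneg hr hx using 1
    show r • x + star (r • x) + (α (r • a) - r • a) = _
    rw [star_smul, star_trivial, map_real_smul, smul_add, smul_add, smul_sub]

lemma mem_invariantCone_of_nonneg {v : A} (hv : 0 ≤ v) : v ∈ α.invariantCone :=
  ⟨0, .zero A, by simpa [(IsSelfAdjoint.of_nonneg hv).star_eq] using add_nonneg hv hv⟩

lemma mem_invariantCone_of_star_eq_neg {k : A} (hk : star k = -k) : k ∈ α.invariantCone :=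
  ⟨0, .zero A, by simp [hk]⟩

lemma map_sub_self_mem_invariantCone (x : A) : α x - x ∈ α.invariantCone := by
  refine ⟨-(x + star x), (IsSelfAdjoint.add_star_self x).neg, ?_⟩
  rw [star_sub, ← map_star, map_neg, map_add]
  exact le_of_eq (by abel)

lemma add_algebraMap_mem_invariantCone {y : A} {t : ℝ} (ht : ‖y‖ ≤ t) :
    y + algebraMap ℝ A t ∈ α.invariantCone := by
  refine ⟨0, .zero A, ?_⟩
  have hy : IsSelfAdjoint (y + star y) := IsSelfAdjoint.add_star_self y
  have hnorm : ‖y + star y‖ ≤ t + t := by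
    linarith [norm_add_le y (star y), norm_star y]
  calc (0 : A) ≤ y + star y + algebraMap ℝ A ‖y + star y‖ := by
        simpa [neg_le_iff_add_nonneg] using hy.neg_algebraMap_norm_le_self
    _ ≤ y + star y + algebraMap ℝ A (t + t) := by gcongr
    _ = _ := by
      rw [map_zero, sub_zero, add_zero, star_add, ← algebraMap_star_comm, star_trivial t, map_add]
      abel

section NonnegOnInvariantCone

variable {α} {φ : A →ₗ[ℝ] ℝ}

lemma apply_eq_zero_of_star_eq_neg (hφ : ∀ x ∈ α.invariantCone, 0 ≤ φ x) {k : A}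
    (hk : star k = -k) : φ k = 0 := by
  have hk' : star (-k) = -(-k) := by rw [star_neg, hk]
  have := hφ _ (α.mem_invariantCone_of_star_eq_neg hk')
  rw [map_neg] at this
  exact le_antisymm (by linarith) (hφ _ (α.mem_invariantCone_of_star_eq_neg hk))

lemma apply_star_eq (hφ : ∀ x ∈ α.invariantCone, 0 ≤ φ x) (x : A) : φ (star x) = φ x := by
  have := apply_eq_zero_of_star_eq_neg hφ (k := star x - x) (by rw [star_sub, star_star, neg_sub])
  rwa [map_sub, sub_eq_zero] at this

lemma apply_map_eq (hφ : ∀ x ∈ α.invariantCone, 0 ≤ φ x) (x : A) : φ (α x) = φ x := by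
  have h₁ := hφ _ (α.map_sub_self_mem_invariantCone x)
  have h₂ := hφ _ (α.map_sub_self_mem_invariantCone (-x))
  rw [map_sub] at h₁
  rw [map_neg, map_sub, map_neg, map_neg] at h₂
  linarith

lemma abs_apply_le_norm (hφ : ∀ x ∈ α.invariantCone, 0 ≤ φ x) (hφ1 : φ 1 = 1) (x : A) :
    |φ x| ≤ ‖x‖ := by
  set h := x + star x
  have hh : IsSelfAdjoint h := IsSelfAdjoint.add_star_self x
  have hφ_alg (r : ℝ) : φ (algebraMap ℝ A r) = r := by
    rw [Algebra.algebraMap_eq_smul_one, map_smul, hφ1, smul_eq_mul, mul_one]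
  have h_le := hφ _ (α.mem_invariantCone_of_nonneg (sub_nonneg.2 hh.le_algebraMap_norm_self))
  have h_ge := hφ _ (α.mem_invariantCone_of_nonneg
    (neg_le_iff_add_nonneg.1 hh.neg_algebraMap_norm_le_self))
  rw [map_sub, hφ_alg] at h_le
  rw [map_add, hφ_alg] at h_ge
  have hφh : φ h = 2 * φ x := by rw [map_add, apply_star_eq hφ]; ring
  have hnorm : ‖h‖ ≤ 2 * ‖x‖ := by linarith [norm_add_le x (star x), norm_star x]
  rw [abs_le]
  constructor <;> linarith

lemma exists_state_of_nonneg_on_invariantCone (hφ : ∀ x ∈ α.invariantCone, 0 ≤ φ x)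
    (hφ1 : φ 1 = 1) :
    ∃ Φ : A →L[ℂ] ℂ, IsState Φ ∧ (∀ a, Φ (α a) = Φ a) ∧
      ∀ x, Φ x = φ x - Complex.I * φ (Complex.I • x) := by
  have hskew {k : A} (hk : IsSelfAdjoint k) : φ (Complex.I • k) = 0 :=
    apply_eq_zero_of_star_eq_neg hφ (by simp [star_smul, hk.star_eq])
  let φc : StrongDual ℝ A := φ.mkContinuous 1 fun x ↦ by
    simpa [Real.norm_eq_abs] using abs_apply_le_norm hφ hφ1 x
  refine ⟨StrongDual.extendRCLike φc, ⟨?_, fun a ↦ ?_⟩, fun a ↦ ?_, fun x ↦ rfl⟩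
  · show (φ 1 : ℂ) - Complex.I * φ (Complex.I • 1) = 1
    rw [hφ1, hskew (.one A)]
    simp
  · show 0 ≤ (φ (star a * a) : ℂ) - Complex.I * φ (Complex.I • (star a * a))
    rw [hskew (.star_mul_self a), Complex.ofReal_zero, mul_zero, sub_zero, Complex.zero_le_real]
    exact hφ _ (α.mem_invariantCone_of_nonneg (star_mul_self_nonneg a))
  · show (φ (α a) : ℂ) - Complex.I * φ (Complex.I • α a) = φ a - Complex.I * φ (Complex.I • a)
    rw [← map_smul, apply_map_eq hφ, apply_map_eq hφ]

end NonnegOnInvariantCone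

lemma add_two_mul_nonneg_of_mem_invariantCone [Nontrivial A] (F : StrongDual ℝ A)
    (hF : ‖F‖ ≤ 1) (hFstar : ∀ x, F (star x) = F x) (hFα : ∀ x, F (α x) = F x) (hF1 : F 1 = 0)
    {x : A} {t : ℝ} (h₁ : x + algebraMap ℝ A t ∈ α.invariantCone)
    (h₂ : -x + algebraMap ℝ A t ∈ α.invariantCone) : 0 ≤ F x + 2 * t := by
  obtain ⟨a, ha, hx⟩ := h₁
  obtain ⟨b, hb, hy⟩ := h₂
  have hFt : F (algebraMap ℝ A t) = 0 := by
    rw [Algebra.algebraMap_eq_smul_one, map_smul, hF1, smul_zero]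
  have hFv : F (x + algebraMap ℝ A t + star (x + algebraMap ℝ A t) + (α a - a)) = 2 * F x := by
    simp only [map_add, map_sub, hFα, hFstar, hFt]
    ring
  have hsum : x + algebraMap ℝ A t + star (x + algebraMap ℝ A t) + (α a - a) +
      (-x + algebraMap ℝ A t + star (-x + algebraMap ℝ A t) + (α b - b)) =
      algebraMap ℝ A (4 * t) + (α (a + b) - (a + b)) := by
    rw [show (4 : ℝ) * t = t + t + t + t by ring]
    simp only [star_add, star_neg, ← algebraMap_star_comm, star_trivial t, map_add]
    abel
  have := α.abs_apply_le_of_le_algebraMap_add F hF hFα (ha.add hb) hx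
    (hsum ▸ le_add_of_nonneg_right hy)
  rw [hFv, abs_le] at this
  linarith

lemma exists_sub_eq_of_norm_le_one [Nontrivial A] (F : StrongDual ℝ A) (hF : ‖F‖ ≤ 1)
    (hFstar : ∀ x, F (star x) = F x) (hFα : ∀ x, F (α x) = F x) (hF1 : F 1 = 0) :
    ∃ φ ψ : A →ₗ[ℝ] ℝ, (∀ x ∈ α.invariantCone, 0 ≤ φ x) ∧ (∀ x ∈ α.invariantCone, 0 ≤ ψ x) ∧
      φ 1 = 1 ∧ ψ 1 = 1 ∧ ∀ x, φ x - ψ x = F x := by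
  let L : A × ℝ →ₗ[ℝ] A × A := addNegAlgebraMap ℝ A
  have hL (p : A × ℝ) : L p = (p.1 + algebraMap ℝ A p.2, -p.1 + algebraMap ℝ A p.2) := rfl
  have hL_inj : Function.Injective L := addNegAlgebraMap_injective ℝ A
  let e := LinearEquiv.ofInjective L hL_inj
  let g : A × ℝ →ₗ[ℝ] ℝ := F.toLinearMap ∘ₗ LinearMap.fst ℝ A ℝ + 2 • LinearMap.snd ℝ A ℝ
  let f : (A × A) →ₗ.[ℝ] ℝ := ⟨LinearMap.range L, g ∘ₗ e.symm.toLinearMap⟩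
  have hf (p : A × ℝ) : f ⟨L p, LinearMap.mem_range_self L p⟩ = F p.1 + 2 * p.2 := by
    have : (⟨L p, LinearMap.mem_range_self L p⟩ : LinearMap.range L) = e p := rfl
    simp [f, this, g]
  have hnonneg : ∀ p : f.domain, (p : A × A) ∈ α.invariantCone.prod α.invariantCone →
      0 ≤ f p := by
    rintro ⟨_, p, rfl⟩ ⟨h₁, h₂⟩
    rw [hf p]
    exact α.add_two_mul_nonneg_of_mem_invariantCone F hF hFstar hFα hF1 h₁ h₂
  have hdense : ∀ y, ∃ p : f.domain, (p : A × A) + y ∈ α.invariantCone.prod α.invariantCone := by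
    rintro ⟨y₁, y₂⟩
    refine ⟨⟨L (0, ‖y₁‖ + ‖y₂‖), LinearMap.mem_range_self L _⟩, ?_, ?_⟩
    · simpa [hL, add_comm] using α.add_algebraMap_mem_invariantCone
        (le_add_of_nonneg_right (norm_nonneg y₂) : ‖y₁‖ ≤ ‖y₁‖ + ‖y₂‖)
    · simpa [hL, add_comm] using α.add_algebraMap_mem_invariantCone
        (le_add_of_nonneg_left (norm_nonneg y₁) : ‖y₂‖ ≤ ‖y₁‖ + ‖y₂‖)
  obtain ⟨Λ, hΛf, hΛ⟩ := riesz_extension _ f hnonneg hdense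
  have hΛL (p : A × ℝ) : Λ (L p) = F p.1 + 2 * p.2 := (hΛf _).trans (hf p)
  have hsub (x : A) : Λ (x, 0) - Λ (0, x) = F x := by
    rw [← map_sub, show ((x, 0) - (0, x) : A × A) = L (x, 0) by simp [hL], hΛL]
    simp
  have hadd : Λ (1, 0) + Λ (0, 1) = 2 := by
    rw [← map_add, show ((1, 0) + (0, 1) : A × A) = L (0, 1) by simp [hL], hΛL]
    simp
  have h1 := hsub 1
  rw [hF1] at h1
  exact ⟨Λ ∘ₗ LinearMap.inl ℝ A A, Λ ∘ₗ LinearMap.inr ℝ A A,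
    fun x hx ↦ hΛ _ ⟨hx, zero_mem _⟩, fun x hx ↦ hΛ _ ⟨zero_mem _, hx⟩,
    by simp; linarith, by simp; linarith, hsub⟩

end Order

def fixedPointsAddCoboundaries : Submodule ℂ A where
  carrier := {x | ∃ c : A, α c = c ∧ ∃ a : A, x = c + (a - α a)}
  add_mem' := by
    rintro _ _ ⟨c, hc, a, rfl⟩ ⟨c', hc', a', rfl⟩
    exact ⟨c + c', by rw [map_add, hc, hc'], a + a', by rw [map_add]; abel⟩
  zero_mem' := ⟨0, map_zero α, 0, by simp⟩
  smul_mem' := by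
    rintro z _ ⟨c, hc, a, rfl⟩
    exact ⟨z • c, by rw [map_smul, hc], z • a, by rw [map_smul, smul_add, smul_sub]⟩

lemma mem_fixedPointsAddCoboundaries_of_map_eq {b : A} (hb : α b = b) :
    b ∈ α.fixedPointsAddCoboundaries :=
  ⟨b, hb, 0, by simp⟩

lemma sub_map_mem_fixedPointsAddCoboundaries (a : A) : a - α a ∈ α.fixedPointsAddCoboundaries :=
  ⟨0, map_zero α, a, by simp⟩

def HasUniqueInvariantStateExtensions : Prop :=
  ∀ τ : fixedPointSubalgebra α →L[ℂ] ℂ, IsState τ →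
    ∃! φ : A →L[ℂ] ℂ, IsState φ ∧ (∀ a, φ (α a) = φ a) ∧ ∀ b : fixedPointSubalgebra α, φ b = τ b

variable {α}

lemma HasUniqueInvariantStateExtensions.eq_of_eqOn_fixedPoints
    (h : α.HasUniqueInvariantStateExtensions)
    {Φ Ψ : A →L[ℂ] ℂ} (hΦ : IsState Φ) (hΦα : ∀ a, Φ (α a) = Φ a)
    (hΨ : IsState Ψ) (hΨα : ∀ a, Ψ (α a) = Ψ a) (hΦΨ : ∀ b, α b = b → Φ b = Ψ b) : Φ = Ψ := by
  let τ : fixedPointSubalgebra α →L[ℂ] ℂ :=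
    Φ.comp ⟨(fixedPointSubalgebra α).subtype.toLinearMap, continuous_subtype_val⟩
  exact (h τ ⟨hΦ.1, fun b ↦ hΦ.2 b⟩).unique ⟨hΦ, hΦα, fun b ↦ rfl⟩
    ⟨hΨ, hΨα, fun b ↦ (hΦΨ b b.2).symm⟩

lemma HasUniqueInvariantStateExtensions.eq_zero_of_map_star_eq
    (h : α.HasUniqueInvariantStateExtensions) (F : StrongDual ℝ A)
    (hFstar : ∀ x, F (star x) = F x) (hFα : ∀ x, F (α x) = F x)
    (hFfix : ∀ b, α b = b → F b = 0) : F = 0 := by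
  let _ : PartialOrder A := CStarAlgebra.spectralOrder A
  let _ : StarOrderedRing A := CStarAlgebra.spectralOrderedRing A
  rcases subsingleton_or_nontrivial A with hA | hA
  · ext x
    rw [Subsingleton.elim x 0, map_zero, zero_apply]
  have hc : (1 + ‖F‖)⁻¹ ≠ 0 := by positivity
  set G := (1 + ‖F‖)⁻¹ • F
  have hG : ‖G‖ ≤ 1 := by
    rw [norm_smul, norm_inv, Real.norm_of_nonneg (by positivity), inv_mul_le_iff₀ (by positivity)]
    linarith
  have hGfix (b : A) (hb : α b = b) : G b = 0 := by simp [G, hFfix b hb]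
  obtain ⟨φ, ψ, hφ, hψ, hφ1, hψ1, hφψ⟩ := α.exists_sub_eq_of_norm_le_one G hG
    (by simp [G, hFstar]) (by simp [G, hFα]) (hGfix 1 (map_one α))
  obtain ⟨Φ, hΦ, hΦα, hΦφ⟩ := exists_state_of_nonneg_on_invariantCone hφ hφ1
  obtain ⟨Ψ, hΨ, hΨα, hΨψ⟩ := exists_state_of_nonneg_on_invariantCone hψ hψ1
  have hφψ_fix (b : A) (hb : α b = b) : φ b = ψ b := by
    linarith [hφψ b, hGfix b hb]
  have hΦΨ : Φ = Ψ := h.eq_of_eqOn_fixedPoints hΦ hΦα hΨ hΨα fun b hb ↦ by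
    rw [hΦφ, hΨψ, hφψ_fix b hb, hφψ_fix _ (by rw [map_smul, hb])]
  have hG0 : G = 0 := by
    ext x
    have := congrArg Complex.re (DFunLike.congr_fun hΦΨ x)
    simp only [hΦφ, hΨψ, Complex.sub_re, Complex.ofReal_re, Complex.mul_re, Complex.I_re,
      Complex.I_im, Complex.ofReal_im] at this
    simp only [zero_apply, ← hφψ x]
    linarith
  exact (smul_eq_zero.1 hG0).resolve_left hc

lemma HasUniqueInvariantStateExtensions.apply_star_eq_neg (h : α.HasUniqueInvariantStateExtensions)
    (F : StrongDual ℝ A) (hF : ∀ x ∈ α.fixedPointsAddCoboundaries, F x = 0) (x : A) :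
    F (star x) = -F x := by
  have hFα (a : A) : F (α a) = F a := by
    have := hF _ (α.sub_map_mem_fixedPointsAddCoboundaries a)
    rw [map_sub, sub_eq_zero] at this
    exact this.symm
  have hF₀ := h.eq_zero_of_map_star_eq (F + F.comp (starL' ℝ : A ≃L[ℝ] A).toContinuousLinearMap)
    (fun y ↦ by simp [add_comm]) (fun y ↦ by simp [← map_star, hFα])
    (fun b hb ↦ by
      have hb' : α (star b) = star b := by rw [map_star, hb]
      simp [hF _ (α.mem_fixedPointsAddCoboundaries_of_map_eq hb),
        hF _ (α.mem_fixedPointsAddCoboundaries_of_map_eq hb')])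
  have := DFunLike.congr_fun hF₀ x
  simp only [add_apply, ContinuousLinearMap.coe_comp, Function.comp_apply, zero_apply] at this
  simpa using eq_neg_of_add_eq_zero_right this

lemma HasUniqueInvariantStateExtensions.eq_zero_of_forall_mem
    (h : α.HasUniqueInvariantStateExtensions) (F : StrongDual ℝ A)
    (hF : ∀ x ∈ α.fixedPointsAddCoboundaries, F x = 0) : F = 0 := by
  have hFI := h.apply_star_eq_neg (F.comp (ContinuousLinearMap.lsmul ℝ ℂ Complex.I))
    fun x hx ↦ hF _ (Submodule.smul_mem _ _ hx)
  have hI (x : A) : F (Complex.I • x) = 0 := by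
    have h₁ := h.apply_star_eq_neg F hF (Complex.I • x)
    have h₂ := hFI x
    simp only [ContinuousLinearMap.comp_apply, ContinuousLinearMap.lsmul_apply] at h₂
    rw [star_smul, Complex.star_def, Complex.conj_I, neg_smul, map_neg] at h₁
    linarith
  ext x
  rw [zero_apply, ← hI (-Complex.I • x), smul_smul]
  simp

end StarAlgEquiv

/-- If every state of the fixed-point subalgebra `A^α` has a unique
`α`-invariant state extension to `A`, then `A^α + {a - α a : a ∈ A}` is dense in `A`. -/
theorem dense_of_unique_invariant_state_extension {A : Type*} [NormedRing A] [StarRing A]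
    [CStarRing A] [NormedAlgebra ℂ A] [CompleteSpace A] [StarModule ℂ A]
    (α : A ≃⋆ₐ[ℂ] A)
    (h : ∀ τ : fixedPointSubalgebra α →L[ℂ] ℂ,
      (τ 1 = 1 ∧ ∀ b : fixedPointSubalgebra α, 0 ≤ τ (star b * b)) →
      ∃! φ : A →L[ℂ] ℂ, (φ 1 = 1 ∧ ∀ a : A, 0 ≤ φ (star a * a)) ∧
        (∀ a : A, φ (α a) = φ a) ∧ (∀ b : fixedPointSubalgebra α, φ b = τ b)) :
    Dense {x : A | ∃ c : A, α c = c ∧ ∃ a : A, x = c + (a - α a)} := by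
  let : CStarAlgebra A := {}
  have hα : α.HasUniqueInvariantStateExtensions := h
  exact (α.fixedPointsAddCoboundaries.restrictScalars ℝ).dense_of_forall_dual_eq_zero
    hα.eq_zero_of_forall_mem
end

section
/- Let A be a unital C*-algebra over ℂ and α a *-automorphism of A with fixed-point subalgebra A^α. Suppose that for every a ∈ A the ergodic averages Aₙ(a) = (1/n)·∑_{k=0}^{n-1} αᵏ(a) converge in norm. If E' : A → A is any α-invariant conditional expectation from A onto A^α, then E'(a) = lim_{n→∞} Aₙ(a) for every a ∈ A; in particular there is a unique α-invariant conditional expectation from A onto A^α. -/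
/-!
Applying `α` shifts the `n`-th ergodic average of `a` by `(αⁿ a - a) / n`, which tends to `0`
because `α` is isometric; hence the limit `L` is `α`-fixed and `E' L = L`. On the other hand
`E'` is constant, equal to `E' a`, on all ergodic averages of `a` by `α`-invariance, so by
continuity `E' L = E' a`.
-/

open Filter Topology Function Set

section BirkhoffAverage

variable {𝕜 α E M G : Type*} [RCLike 𝕜]

theorem birkhoffAverage_apply_of_comp_eq [AddCommMonoid M] [Module 𝕜 M] [AddCommMonoid E]
    [Module 𝕜 E] [FunLike G M E] [AddMonoidHomClass G M E] {f : α → α} {g : α → M} (φ : G)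
    (h : (φ ∘ g) ∘ f = φ ∘ g) {n : ℕ} (hn : n ≠ 0) (x : α) :
    φ (birkhoffAverage 𝕜 f g n x) = φ (g x) := by
  rw [map_birkhoffAverage 𝕜 𝕜, birkhoffAverage_of_comp_eq (R := 𝕜) h (Nat.cast_ne_zero.2 hn),
    comp_apply]

variable [NormedAddCommGroup E] [NormedSpace 𝕜 E] [FunLike G E E] [AddMonoidHomClass G E E]

theorem birkhoffAverage_map_apply (T : G) (n : ℕ) (x : E) :
    birkhoffAverage 𝕜 T id n (T x) = T (birkhoffAverage 𝕜 T id n x) := by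
  rw [map_birkhoffAverage 𝕜 𝕜]
  simp only [birkhoffAverage, birkhoffSum, id, comp_apply, ← iterate_succ_apply' T,
    iterate_succ_apply]

theorem isFixedPt_of_tendsto_birkhoffAverage {T : G} (hT : Continuous T) {x L : E}
    (hx : Bornology.IsBounded (range (T^[·] x)))
    (hL : Tendsto (birkhoffAverage 𝕜 T id · x) atTop (𝓝 L)) :
    IsFixedPt T L := by
  have hshift : Tendsto (birkhoffAverage 𝕜 T id · (T x)) atTop (𝓝 L) := by
    simpa using hL.add (tendsto_birkhoffAverage_apply_sub_birkhoffAverage 𝕜 (g := id) hx)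
  simp only [birkhoffAverage_map_apply] at hshift
  exact tendsto_nhds_unique ((hT.tendsto L).comp hL) hshift

end BirkhoffAverage

theorem invariant_conditional_expectation_unique_general {A : Type*} [NormedRing A] [StarRing A]
    [CStarRing A] [NormedAlgebra ℂ A] [CompleteSpace A] [StarModule ℂ A]
    (α : A ≃⋆ₐ[ℂ] A)
    (hconv : ∀ a : A, ∃ L : A,
      Tendsto (fun n : ℕ => (n : ℂ)⁻¹ • ∑ k ∈ Finset.range n, (⇑α)^[k] a) atTop (𝓝 L))
    (E' : A →L[ℂ] A)
    (hfix : ∀ b : A, α b = b → E' b = b)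
    (hinv : ∀ a : A, E' (α a) = E' a) :
    ∀ a : A,
      Tendsto (fun n : ℕ => (n : ℂ)⁻¹ • ∑ k ∈ Finset.range n, (⇑α)^[k] a) atTop (𝓝 (E' a)) := by
  let _ : CStarAlgebra A := {}
  intro a
  obtain ⟨L, hL⟩ := hconv a
  have horbit : Bornology.IsBounded (range ((⇑α)^[·] a)) :=
    isBounded_iff_forall_norm_le.2 ⟨‖a‖, by
      rintro _ ⟨n, rfl⟩
      dsimp only
      rw [← StarAlgEquiv.coe_pow, StarAlgEquiv.norm_map]⟩
  have hαL : α L = L :=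
    isFixedPt_of_tendsto_birkhoffAverage (StarAlgEquiv.isometry α).continuous horbit hL
  have hE'L : E' L = E' a := by
    refine tendsto_nhds_unique ((E'.continuous.tendsto L).comp hL) <|
      tendsto_const_nhds.congr' <| (eventually_ne_atTop 0).mono fun n hn => ?_
    exact (birkhoffAverage_apply_of_comp_eq (g := id) E' (funext hinv) hn a).symm
  rwa [← hE'L, hfix L hαL]

/-- If all ergodic averages converge in norm, then any `α`-invariant conditional
expectation `E'` from `A` onto the fixed-point subalgebra `A^α` is given by
`E'(a) = lim_n (1/n) ∑_{k<n} αᵏ(a)`; in particular it is unique. -/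
theorem invariant_conditional_expectation_unique {A : Type*} [NormedRing A] [StarRing A]
    [CStarRing A] [NormedAlgebra ℂ A] [CompleteSpace A] [StarModule ℂ A]
    (α : A ≃⋆ₐ[ℂ] A)
    (hconv : ∀ a : A, ∃ L : A,
      Tendsto (fun n : ℕ => (n : ℂ)⁻¹ • ∑ k ∈ Finset.range n, (⇑α)^[k] a) atTop (𝓝 L))
    (E' : A →L[ℂ] A)
    (hran : ∀ a : A, α (E' a) = E' a)
    (hfix : ∀ b : A, α b = b → E' b = b)
    (hnorm : ‖E'‖ = 1)
    (hinv : ∀ a : A, E' (α a) = E' a) :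
    ∀ a : A,
      Tendsto (fun n : ℕ => (n : ℂ)⁻¹ • ∑ k ∈ Finset.range n, (⇑α)^[k] a) atTop (𝓝 (E' a)) :=
  invariant_conditional_expectation_unique_general α hconv E' hfix hinv
end

section
/- Let A be a unital C*-algebra over ℂ and α a *-automorphism of A with fixed-point subalgebra A^α. Suppose that for every a ∈ A the ergodic averages Aₙ(a) = (1/n)·∑_{k=0}^{n-1} αᵏ(a) converge in norm, and let E(a) = lim_{n→∞} Aₙ(a). Then every bounded linear functional τ : A^α → ℂ has a unique bounded linear extension φ : A → ℂ satisfying φ ∘ α = φ, namely φ = τ ∘ E. -/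
open Filter Topology

theorem birkhoffAverage_comp_self (R : Type*) {α M : Type*} [DivisionSemiring R]
    [AddCommMonoid M] [Module R M] (f : α → α) (g : α → M) (n : ℕ) (x : α) :
    birkhoffAverage R f (g ∘ f) n x = birkhoffAverage R f g n (f x) := by
  simp only [birkhoffAverage, birkhoffSum, Function.comp_apply,
    ← Function.iterate_succ_apply' f, Function.iterate_succ_apply]

section TopologicalModule

variable {𝕜 α E : Type*} [RCLike 𝕜] [AddCommGroup E] [TopologicalSpace E]
  [IsTopologicalAddGroup E] [Module 𝕜 E] [ContinuousSMul 𝕜 E] {f : α → α} {g : α → E}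

theorem tendsto_inv_smul_apply_iterate_of_tendsto_birkhoffAverage {x : α} {L : E}
    (h : Tendsto (birkhoffAverage 𝕜 f g · x) atTop (𝓝 L)) :
    Tendsto (fun n : ℕ ↦ (n : 𝕜)⁻¹ • g (f^[n] x)) atTop (𝓝 0) := by
  have hinv : Tendsto (fun n : ℕ ↦ (n : 𝕜)⁻¹) atTop (𝓝 0) := tendsto_inv_atTop_nhds_zero_nat
  have hshift := (tendsto_add_atTop_iff_nat 1).2 h
  have hlim := ((tendsto_const_nhds (x := (1 : 𝕜))).add hinv).smul hshift |>.sub h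
  rw [add_zero, one_smul, sub_self] at hlim
  refine hlim.congr' ((eventually_ne_atTop 0).mono fun n hn ↦ ?_)
  have hcoef : (1 + (n : 𝕜)⁻¹) * ((n + 1 : ℕ) : 𝕜)⁻¹ = (n : 𝕜)⁻¹ := by
    have : (n : 𝕜) ≠ 0 := Nat.cast_ne_zero.2 hn
    push_cast
    field_simp
  rw [birkhoffAverage, birkhoffAverage, birkhoffSum_succ, smul_smul, hcoef, smul_add,
    add_sub_cancel_left]

theorem tendsto_birkhoffAverage_apply_sub_birkhoffAverage_of_tendsto {x : α} {L : E}
    (h : Tendsto (birkhoffAverage 𝕜 f g · x) atTop (𝓝 L)) :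
    Tendsto (fun n ↦ birkhoffAverage 𝕜 f g n (f x) - birkhoffAverage 𝕜 f g n x) atTop (𝓝 0) := by
  simp_rw [birkhoffAverage_apply_sub_birkhoffAverage, smul_sub]
  simpa using (tendsto_inv_smul_apply_iterate_of_tendsto_birkhoffAverage h).sub
    ((tendsto_inv_atTop_nhds_zero_nat (𝕜 := 𝕜)).smul_const (g x))

theorem apply_eq_of_tendsto_birkhoffAverage [T2Space E] {P : α → E}
    (hP : ∀ x, Tendsto (birkhoffAverage 𝕜 f g · x) atTop (𝓝 (P x))) (x : α) : P (f x) = P x :=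
  sub_eq_zero.1 <| tendsto_nhds_unique ((hP (f x)).sub (hP x))
    (tendsto_birkhoffAverage_apply_sub_birkhoffAverage_of_tendsto (hP x))

end TopologicalModule

namespace ContinuousLinearMap

theorem isFixedPt_of_tendsto_birkhoffAverage {𝕜 X : Type*} [RCLike 𝕜] [AddCommGroup X]
    [TopologicalSpace X] [IsTopologicalAddGroup X] [Module 𝕜 X] [ContinuousSMul 𝕜 X]
    [T2Space X] {T : X →L[𝕜] X} {P : X → X}
    (hP : ∀ x, Tendsto (birkhoffAverage 𝕜 T id · x) atTop (𝓝 (P x))) (x : X) :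
    Function.IsFixedPt T (P x) := by
  have hTP : Tendsto (fun n ↦ T (birkhoffAverage 𝕜 T id n x)) atTop (𝓝 (T (P x))) :=
    (T.continuous.tendsto _).comp (hP x)
  refine (tendsto_nhds_unique (hTP.congr fun n ↦ ?_) (hP (T x))).trans
    (apply_eq_of_tendsto_birkhoffAverage hP x)
  rw [map_birkhoffAverage 𝕜 𝕜 T, ← birkhoffAverage_comp_self]
  rfl

theorem apply_eq_of_comp_eq_of_tendsto_birkhoffAverage {𝕜 X Y : Type*} [DivisionSemiring 𝕜]
    [CharZero 𝕜] [AddCommMonoid X] [TopologicalSpace X] [Module 𝕜 X] [AddCommMonoid Y]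
    [TopologicalSpace Y] [Module 𝕜 Y] [T2Space Y] {f : X → X} {P : X → X}
    (hP : ∀ x, Tendsto (birkhoffAverage 𝕜 f id · x) atTop (𝓝 (P x))) {φ : X →L[𝕜] Y}
    (hφ : ⇑φ ∘ f = φ) (x : X) : φ (P x) = φ x := by
  have hφP : Tendsto (fun n ↦ φ (birkhoffAverage 𝕜 f id n x)) atTop (𝓝 (φ (P x))) :=
    (φ.continuous.tendsto _).comp (hP x)
  refine tendsto_nhds_unique hφP (tendsto_const_nhds.congr' ?_)
  filter_upwards [eventually_ne_atTop 0] with n hn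
  rw [map_birkhoffAverage 𝕜 𝕜 φ, Function.comp_id,
    birkhoffAverage_of_comp_eq 𝕜 hφ (Nat.cast_ne_zero.2 hn)]

theorem exists_coe_eq_of_tendsto_birkhoffAverage {𝕜 X : Type*} [RCLike 𝕜]
    [NormedAddCommGroup X] [NormedSpace 𝕜 X] [CompleteSpace X] (T : X →L[𝕜] X) {P : X → X}
    (hP : ∀ x, Tendsto (birkhoffAverage 𝕜 T id · x) atTop (𝓝 (P x))) :
    ∃ Q : X →L[𝕜] X, ⇑Q = P :=
  ⟨continuousLinearMapOfTendsto (fun n : ℕ ↦ (n : 𝕜)⁻¹ • ∑ k ∈ Finset.range n, T ^ k)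
    (tendsto_pi_nhds.2 fun x ↦ by simpa [birkhoffAverage, birkhoffSum] using hP x), rfl⟩

end ContinuousLinearMap

/-- If all ergodic averages converge in norm, with limit map `E`, then every
bounded linear functional `τ` on the fixed-point subalgebra `A^α` has a unique bounded
`α`-invariant linear extension to `A`, namely `τ ∘ E`. -/
theorem unique_invariant_functional_extension {A : Type*} [NormedRing A] [StarRing A]
    [CStarRing A] [NormedAlgebra ℂ A] [CompleteSpace A] [StarModule ℂ A]
    (α : A ≃⋆ₐ[ℂ] A) (E : A → A)
    (hE : ∀ a : A,
      Tendsto (fun n : ℕ => (n : ℂ)⁻¹ • ∑ k ∈ Finset.range n, (⇑α)^[k] a) atTop (𝓝 (E a))) :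
    ∀ τ : fixedPointSubalgebra α →L[ℂ] ℂ,
      (∃! φ : A →L[ℂ] ℂ,
        (∀ b : fixedPointSubalgebra α, φ b = τ b) ∧ ∀ a : A, φ (α a) = φ a) ∧
      (∀ φ : A →L[ℂ] ℂ,
        ((∀ b : fixedPointSubalgebra α, φ b = τ b) ∧ ∀ a : A, φ (α a) = φ a) →
        ∀ a : A, ∀ h : α (E a) = E a, φ a = τ ⟨E a, h⟩) := by
  intro τ
  let _ : CStarAlgebra A := ⟨⟩
  let T : A →L[ℂ] A := ⟨α.toAlgEquiv.toLinearMap, (StarAlgEquiv.isometry α).continuous⟩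
  have hT : ∀ a, Tendsto (birkhoffAverage ℂ T id · a) atTop (𝓝 (E a)) := hE
  obtain ⟨P, rfl⟩ := T.exists_coe_eq_of_tendsto_birkhoffAverage hT
  have hPα : ∀ a, α (P a) = P a := T.isFixedPt_of_tendsto_birkhoffAverage hT
  let φ₀ : A →L[ℂ] ℂ :=
    τ.comp (P.codRestrict (fixedPointSubalgebra α).toSubalgebra.toSubmodule hPα)
  have hφ₀ : ∀ a, φ₀ a = τ ⟨P a, hPα a⟩ := fun _ ↦ rfl
  have huniq : ∀ φ : A →L[ℂ] ℂ,
      ((∀ b : fixedPointSubalgebra α, φ b = τ b) ∧ ∀ a : A, φ (α a) = φ a) →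
      ∀ a : A, ∀ h : α (P a) = P a, φ a = τ ⟨P a, h⟩ := by
    rintro φ ⟨hext, hinv⟩ a h
    rw [← ContinuousLinearMap.apply_eq_of_comp_eq_of_tendsto_birkhoffAverage hT
      (funext hinv : ⇑φ ∘ T = φ)]
    exact hext ⟨P a, h⟩
  refine ⟨⟨φ₀, ⟨fun b ↦ ?_, fun a ↦ ?_⟩, fun φ hφ ↦ ?_⟩, huniq⟩
  · rw [hφ₀]
    congr
    exact tendsto_nhds_unique (hT b) (Function.IsFixedPt.tendsto_birkhoffAverage ℂ b.2 id)
  · rw [hφ₀, hφ₀]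
    congr 2
    exact apply_eq_of_tendsto_birkhoffAverage hT a
  · ext a
    rw [huniq φ hφ a (hPα a), hφ₀]
end

section
/- Let A be a unital C*-algebra over ℂ and α a *-automorphism of A with fixed-point subalgebra A^α. Then the linear subspace A^α + {a − α(a) : a ∈ A} is dense in A (in the norm topology) if and only if A^α + closure({a − α(a) : a ∈ A}) = A, where the closure is taken in the norm topology. -/
/-!
The Cesàro averages `(1/n) ∑_{k<n} αᵏ` of a linear contraction are 1-Lipschitz, fix the
fixed points and tend to `0` on `a - α a`, hence on the closure `B` of all such vectors.
Comparing the averages of `c` and `b` gives `‖c‖ ≤ ‖c - b‖` for `c` fixed and `b ∈ B`: the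
decomposition `x = c + b` has a bounded projection onto the fixed points, so by completeness
`A^α + B` is closed, and therefore equal to the closure of `A^α + {a - α a}`.
-/

open Filter Topology Function

section BirkhoffAverage

variable {𝕜 X E : Type*} [RCLike 𝕜] [PseudoMetricSpace X] [NormedAddCommGroup E]
  [NormedSpace 𝕜 E]

theorem lipschitzWith_birkhoffAverage {f : X → X} {g : X → E} (hf : LipschitzWith 1 f)
    (hg : LipschitzWith 1 g) (n : ℕ) : LipschitzWith 1 (birkhoffAverage 𝕜 f g n) := by
  refine LipschitzWith.of_dist_le_mul fun x y ↦ ?_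
  calc dist (birkhoffAverage 𝕜 f g n x) (birkhoffAverage 𝕜 f g n y)
      ≤ (∑ k ∈ Finset.range n, dist (g (f^[k] x)) (g (f^[k] y))) / n :=
        dist_birkhoffAverage_birkhoffAverage_le ..
    _ ≤ (∑ _k ∈ Finset.range n, dist x y) / n := by
        gcongr with k
        simpa using ((hg.comp (hf.iterate k)).dist_le_mul x y)
    _ ≤ 1 * dist x y := by
        rcases eq_or_ne n 0 with rfl | hn
        · simp
        · simp [hn]

end BirkhoffAverage

namespace LinearMap

variable {𝕜 E : Type*} [RCLike 𝕜] [NormedAddCommGroup E] [NormedSpace 𝕜 E]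
  {f : E →ₗ[𝕜] E}

theorem tendsto_birkhoffAverage_zero_of_mem_topologicalClosure_range (hf : LipschitzWith 1 f)
    {y : E} (hy : y ∈ (range (1 - f)).topologicalClosure) :
    Tendsto (birkhoffAverage 𝕜 f _root_.id · y) atTop (𝓝 0) := by
  have hclosed : IsClosed {x | Tendsto (birkhoffAverage 𝕜 f _root_.id · x) atTop (𝓝 0)} :=
    isClosed_setOfPred_tendsto_birkhoffAverage 𝕜 hf uniformContinuous_id continuous_const
  refine closure_minimal (Set.forall_mem_range.2 fun x ↦ ?_) hclosed hy
  have hbdd : Bornology.IsBounded (Set.range (_root_.id <| f^[·] x)) :=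
    isBounded_iff_forall_norm_le.2 ⟨‖x‖, Set.forall_mem_range.2 fun n ↦ by
      simpa [iterate_map_zero (f : E →+ E)] using (hf.iterate n).dist_le_mul x 0⟩
  have hsub : ∀ n x y, f^[n] (x - y) = f^[n] x - f^[n] y := iterate_map_sub (f : E →+ E)
  simpa [birkhoffAverage, birkhoffSum, Finset.sum_sub_distrib, smul_sub, hsub]
    using (tendsto_birkhoffAverage_apply_sub_birkhoffAverage 𝕜 hbdd).neg

theorem norm_le_dist_of_mem_eqLocus_of_mem_topologicalClosure_range (hf : LipschitzWith 1 f)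
    {c b : E} (hc : c ∈ eqLocus f 1) (hb : b ∈ (range (1 - f)).topologicalClosure) :
    ‖c‖ ≤ dist c b := by
  have hlim : Tendsto (fun n ↦ dist (birkhoffAverage 𝕜 f _root_.id n c)
      (birkhoffAverage 𝕜 f _root_.id n b)) atTop (𝓝 (dist c 0)) :=
    (IsFixedPt.tendsto_birkhoffAverage 𝕜 hc _root_.id).dist
      (tendsto_birkhoffAverage_zero_of_mem_topologicalClosure_range hf hb)
  rw [← dist_zero_right]
  refine le_of_tendsto' hlim fun n ↦ ?_
  simpa using (lipschitzWith_birkhoffAverage hf LipschitzWith.id n).dist_le_mul c b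

theorem dist_le_dist_add_of_mem_eqLocus (hf : LipschitzWith 1 f) {c c' b b' : E}
    (hc : c ∈ eqLocus f 1) (hc' : c' ∈ eqLocus f 1)
    (hb : b ∈ (range (1 - f)).topologicalClosure)
    (hb' : b' ∈ (range (1 - f)).topologicalClosure) :
    dist c c' ≤ dist (c + b) (c' + b') := by
  calc dist c c' = ‖c - c'‖ := dist_eq_norm c c'
    _ ≤ dist (c - c') (b' - b) :=
      norm_le_dist_of_mem_eqLocus_of_mem_topologicalClosure_range hf (sub_mem hc hc')
        (sub_mem hb' hb)
    _ = dist (c + b) (c' + b') := by rw [dist_eq_norm, dist_eq_norm]; abel_nf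

theorem isClosed_eqLocus_sup_topologicalClosure_range [CompleteSpace E] (hf : LipschitzWith 1 f) :
    IsClosed ((eqLocus f 1 ⊔ (range (1 - f)).topologicalClosure : Submodule 𝕜 E) : Set E) := by
  refine isClosed_of_closure_subset fun x hx ↦ ?_
  obtain ⟨u, hu, hux⟩ := mem_closure_iff_seq_limit.1 hx
  choose c hc b hb hcb using fun n ↦ Submodule.mem_sup.1 (hu n)
  have hc_cauchy : CauchySeq c := by
    have hu_cauchy := Metric.cauchySeq_iff.1 hux.cauchySeq
    refine Metric.cauchySeq_iff.2 fun ε hε ↦ ?_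
    obtain ⟨N, hN⟩ := hu_cauchy ε hε
    refine ⟨N, fun m hm n hn ↦ ?_⟩
    have := dist_le_dist_add_of_mem_eqLocus hf (hc m) (hc n) (hb m) (hb n)
    rw [hcb, hcb] at this
    exact this.trans_lt (hN m hm n hn)
  obtain ⟨c₀, hc₀⟩ := cauchySeq_tendsto_of_complete hc_cauchy
  have hc₀_mem : c₀ ∈ eqLocus f 1 :=
    (isClosed_eq hf.continuous continuous_id).mem_of_tendsto hc₀ (.of_forall hc)
  have hb₀_mem : x - c₀ ∈ (range (1 - f)).topologicalClosure :=
    (Submodule.isClosed_topologicalClosure _).mem_of_tendsto (hux.sub hc₀)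
      (.of_forall fun n ↦ by rw [← hcb, add_sub_cancel_left]; exact hb n)
  exact Submodule.mem_sup.2 ⟨c₀, hc₀_mem, x - c₀, hb₀_mem, add_sub_cancel _ _⟩

theorem topologicalClosure_eqLocus_sup_range [CompleteSpace E] (hf : LipschitzWith 1 f) :
    (eqLocus f 1 ⊔ range (1 - f)).topologicalClosure =
      eqLocus f 1 ⊔ (range (1 - f)).topologicalClosure :=
  le_antisymm
    (Submodule.topologicalClosure_minimal _ (sup_le_sup_left (Submodule.le_topologicalClosure _) _)
      (isClosed_eqLocus_sup_topologicalClosure_range hf))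
    (sup_le (le_sup_left.trans (Submodule.le_topologicalClosure _))
      (Submodule.topologicalClosure_mono le_sup_right))

end LinearMap

/-- The subspace `A^α + {a - α a : a ∈ A}` is dense in `A` if and only if
`A^α + closure {a - α a : a ∈ A} = A`. -/
theorem dense_iff_fixed_plus_closure {A : Type*} [NormedRing A] [StarRing A] [CStarRing A]
    [NormedAlgebra ℂ A] [CompleteSpace A] [StarModule ℂ A] (α : A ≃⋆ₐ[ℂ] A) :
    Dense {x : A | ∃ c : A, α c = c ∧ ∃ a : A, x = c + (a - α a)} ↔
    ∀ x : A, ∃ c : A, α c = c ∧ x - c ∈ closure {y : A | ∃ a : A, y = a - α a} := by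
  let _ : CStarAlgebra A := ⟨⟩
  let f : A →ₗ[ℂ] A := α.toAlgEquiv.toLinearMap
  have hf : LipschitzWith 1 f := (StarAlgEquiv.isometry α).lipschitz
  have hB : {y : A | ∃ a : A, y = a - α a} = LinearMap.range (1 - f) := by
    ext y; simp [f, eq_comm]
  have hD : {x : A | ∃ c : A, α c = c ∧ ∃ a : A, x = c + (a - α a)} =
      (LinearMap.eqLocus f 1 ⊔ LinearMap.range (1 - f) : Submodule ℂ A) := by
    ext x; simp [Submodule.mem_sup, f, eq_comm]
  rw [hD, hB, Submodule.dense_iff_topologicalClosure_eq_top,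
    LinearMap.topologicalClosure_eqLocus_sup_range hf, Submodule.eq_top_iff']
  simp [Submodule.mem_sup, f, ← Submodule.topologicalClosure_coe, ← eq_sub_iff_add_eq']
end

section
/- Let A be a unital C*-algebra over ℂ and α a *-automorphism of A with fixed-point subalgebra A^α. Suppose that every bounded linear functional on A^α has a unique bounded linear extension φ to A satisfying φ ∘ α = φ, and let E be an α-invariant conditional expectation from A onto A^α. Then the kernel of E is contained in the norm closure of {a − α(a) : a ∈ A}. -/
open Filter Topology

/-! If `E x = 0` but `x` lies outside the closure of the coboundaries `a - α a`, Hahn–Banach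
gives a functional `φ` vanishing on them, i.e. an `α`-invariant one, with `φ x ≠ 0`. Since
`E` fixes `A^α` and `E ∘ α = E`, both `φ` and `φ ∘ E` are invariant extensions of `φ|A^α`,
so by uniqueness `φ x = φ (E x) = 0`. -/

theorem Submodule.exists_dual_eq_zero_ne_zero_of_notMem_closure
    {𝕜 E : Type*} [RCLike 𝕜] [NormedAddCommGroup E] [NormedSpace 𝕜 E] {p : Submodule 𝕜 E} {x : E}
    (hx : x ∉ p.topologicalClosure) : ∃ f : StrongDual 𝕜 E, (∀ y ∈ p, f y = 0) ∧ f x ≠ 0 := by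
  have : IsClosed (p.topologicalClosure : Set E) := p.isClosed_topologicalClosure
  have hx' : p.topologicalClosure.mkQ x ≠ 0 := by simpa using hx
  obtain ⟨g, hg⟩ := SeparatingDual.exists_ne_zero (R := 𝕜) hx'
  refine ⟨g ∘L p.topologicalClosure.mkQL, fun y hy => ?_, hg⟩
  simp [(Submodule.Quotient.mk_eq_zero _).2 (p.le_topologicalClosure hy)]

theorem exists_invariant_dual_ne_zero_of_notMem_closure
    {𝕜 E : Type*} [RCLike 𝕜] [NormedAddCommGroup E] [NormedSpace 𝕜 E] {T : E →ₗ[𝕜] E} {x : E}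
    (hx : x ∉ closure {y | ∃ a, y = a - T a}) :
    ∃ f : StrongDual 𝕜 E, (∀ a, f (T a) = f a) ∧ f x ≠ 0 := by
  have hrange : {y | ∃ a, y = a - T a} = (LinearMap.range (LinearMap.id - T) : Set E) := by
    ext y; simp [eq_comm]
  rw [hrange, ← Submodule.topologicalClosure_coe] at hx
  obtain ⟨f, hf, hfx⟩ := Submodule.exists_dual_eq_zero_ne_zero_of_notMem_closure hx
  refine ⟨f, fun a => ?_, hfx⟩
  have := hf (a - T a) ⟨a, rfl⟩
  rw [map_sub, sub_eq_zero] at this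
  exact this.symm

theorem comp_eq_of_existsUnique_invariant_extension {A : Type*} [NormedRing A] [StarRing A]
    [NormedAlgebra ℂ A] [StarModule ℂ A] {α : A ≃⋆ₐ[ℂ] A}
    (h : ∀ τ : fixedPointSubalgebra α →L[ℂ] ℂ,
      ∃! φ : A →L[ℂ] ℂ,
        (∀ b : fixedPointSubalgebra α, φ b = τ b) ∧ ∀ a : A, φ (α a) = φ a)
    {E : A →L[ℂ] A} (hfix : ∀ b : A, α b = b → E b = b) (hinv : ∀ a : A, E (α a) = E a)
    {φ : A →L[ℂ] ℂ} (hφ : ∀ a : A, φ (α a) = φ a) : φ ∘L E = φ :=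
  (h (φ ∘L (fixedPointSubalgebra α).toSubalgebra.toSubmodule.subtypeL)).unique
    ⟨fun b => congrArg φ (hfix b b.2), fun a => congrArg φ (hinv a)⟩ ⟨fun _ => rfl, hφ⟩

theorem ker_conditional_expectation_subset_closure_general {A : Type*} [NormedRing A] [StarRing A]
    [NormedAlgebra ℂ A] [StarModule ℂ A]
    (α : A ≃⋆ₐ[ℂ] A)
    (h : ∀ τ : fixedPointSubalgebra α →L[ℂ] ℂ,
      ∃! φ : A →L[ℂ] ℂ,
        (∀ b : fixedPointSubalgebra α, φ b = τ b) ∧ ∀ a : A, φ (α a) = φ a)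
    (E : A →L[ℂ] A)
    (hfix : ∀ b : A, α b = b → E b = b)
    (hinv : ∀ a : A, E (α a) = E a) :
    ∀ x : A, E x = 0 → x ∈ closure {y : A | ∃ a : A, y = a - α a} := by
  intro x hx
  by_contra hxc
  obtain ⟨φ, hφ, hφx⟩ :=
    exists_invariant_dual_ne_zero_of_notMem_closure (T := (α : A →ₗ[ℂ] A)) hxc
  apply hφx
  rw [← comp_eq_of_existsUnique_invariant_extension h hfix hinv hφ,
    ContinuousLinearMap.comp_apply, hx, map_zero]

/-- If every bounded linear functional on `A^α` has a unique bounded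
`α`-invariant linear extension to `A`, and `E` is an `α`-invariant conditional expectation
from `A` onto `A^α`, then `ker E ⊆ closure {a - α a : a ∈ A}`. -/
theorem ker_conditional_expectation_subset_closure {A : Type*} [NormedRing A] [StarRing A]
    [CStarRing A] [NormedAlgebra ℂ A] [CompleteSpace A] [StarModule ℂ A]
    (α : A ≃⋆ₐ[ℂ] A)
    (h : ∀ τ : fixedPointSubalgebra α →L[ℂ] ℂ,
      ∃! φ : A →L[ℂ] ℂ,
        (∀ b : fixedPointSubalgebra α, φ b = τ b) ∧ ∀ a : A, φ (α a) = φ a)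
    (E : A →L[ℂ] A)
    (hran : ∀ a : A, α (E a) = E a)
    (hfix : ∀ b : A, α b = b → E b = b)
    (hnorm : ‖E‖ = 1)
    (hinv : ∀ a : A, E (α a) = E a) :
    ∀ x : A, E x = 0 → x ∈ closure {y : A | ∃ a : A, y = a - α a} :=
  ker_conditional_expectation_subset_closure_general α h E hfix hinv
end
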